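/- The polar cone of K = { y ∈ ℝ^n : A y ≥ 0 } equals { −Aᵀ λ : λ ∈ ℝ^m, λ ≥ 0 }, i.e., the set of nonnegative combinations of the negated rows of A. -/

import Mathlib

/-!
The cone `K` is the inner dual of the set of rows of `A`, so the polar cone of `K` is the negative
of the double dual of the rows, and the bipolar theorem identifies that double dual with the cone
hull of the rows, provided this hull is closed. Closedness follows from the conic Carathéodory
theorem: every conic combination can be rewritten over a linearly independent set of generators,
so the hull is a finite union of images of orthants under injective linear maps.
-/

open Set RealInnerProductSpace

variable {ι : Type*} [Fintype ι]

section Caratheodory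

variable {E : Type*} [AddCommGroup E] [Module ℝ E] {v : ι → E} {x : E}

theorem PointedCone.mem_hull_range_iff :
    x ∈ PointedCone.hull ℝ (range v) ↔ ∃ c : ι → ℝ, 0 ≤ c ∧ ∑ i, c i • v i = x := by
  rw [PointedCone.hull, Submodule.mem_span_range_iff_exists_fun]
  constructor
  · rintro ⟨c, rfl⟩
    exact ⟨fun i => c i, fun i => (c i).2, rfl⟩
  · rintro ⟨c, hc, rfl⟩
    exact ⟨fun i => ⟨c i, hc i⟩, rfl⟩

theorem exists_support_ssubset_of_sum_smul_eq_zero {c g : ι → ℝ} (hc : 0 ≤ c)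
    (hg : ∑ i, g i • v i = 0) (hgc : Function.support g ⊆ Function.support c)
    (hpos : ∃ i, 0 < g i) :
    ∃ c' : ι → ℝ, 0 ≤ c' ∧ ∑ i, c' i • v i = ∑ i, c i • v i ∧
      Function.support c' ⊂ Function.support c := by
  classical
  obtain ⟨i₀, hi₀, hmin⟩ := Finset.exists_min_image (Finset.univ.filter fun i => 0 < g i)
    (fun i => c i / g i) (by simpa [Finset.Nonempty] using hpos)
  rw [Finset.mem_filter_univ] at hi₀
  -- the largest step along `-g` that keeps `c` nonnegative; it kills the coefficient at `i₀`
  set t := c i₀ / g i₀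
  have hnonneg : 0 ≤ c - t • g := by
    intro i
    rcases lt_or_ge 0 (g i) with hgi | hgi
    · have := hmin i (by simpa using hgi)
      simp only [Pi.sub_apply, Pi.smul_apply, smul_eq_mul, Pi.zero_apply, sub_nonneg]
      rwa [← le_div_iff₀ hgi]
    · have : t * g i ≤ 0 := mul_nonpos_of_nonneg_of_nonpos (div_nonneg (hc i₀) hi₀.le) hgi
      simp only [Pi.sub_apply, Pi.smul_apply, smul_eq_mul, Pi.zero_apply]
      have hci : 0 ≤ c i := hc i
      linarith
  refine ⟨c - t • g, hnonneg, ?_, ?_⟩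
  · simp [sub_smul, Finset.sum_sub_distrib, mul_smul, ← Finset.smul_sum, hg]
  · refine (Set.ssubset_iff_of_subset ?_).2 ⟨i₀, hgc hi₀.ne', ?_⟩
    · intro i hi
      by_contra hci
      have : g i = 0 := by_contra fun h => hci (hgc h)
      simp_all
    · simp [t, div_mul_cancel₀ _ hi₀.ne']

theorem exists_support_ssubset_of_not_linearIndepOn {c : ι → ℝ} (hc : 0 ≤ c)
    (hdep : ¬LinearIndepOn ℝ v (Function.support c)) :
    ∃ c' : ι → ℝ, 0 ≤ c' ∧ ∑ i, c' i • v i = ∑ i, c i • v i ∧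
      Function.support c' ⊂ Function.support c := by
  classical
  obtain ⟨t, g, hts, hgt, hg, hne⟩ : ∃ (t : Finset ι) (g : ι → ℝ), ↑t ⊆ Function.support c ∧
      (∀ i ∉ t, g i = 0) ∧ ∑ i ∈ t, g i • v i = 0 ∧ ∃ i ∈ t, g i ≠ 0 := by
    simpa [linearIndepOn_iff''] using hdep
  have hsum : ∑ i, g i • v i = 0 := by
    rwa [← Finset.sum_subset (Finset.subset_univ t) fun i _ hi => by simp [hgt i hi]]
  have hsupp : Function.support g ⊆ Function.support c :=
    fun i hi => hts (by_contra fun h => hi (hgt i h))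
  obtain ⟨i, -, hi⟩ := hne
  rcases hi.lt_or_gt with hneg | hpos
  · exact exists_support_ssubset_of_sum_smul_eq_zero hc (g := -g) (by simp [hsum])
      (by rwa [Function.support_neg]) ⟨i, by simpa using hneg⟩
  · exact exists_support_ssubset_of_sum_smul_eq_zero hc hsum hsupp ⟨i, hpos⟩

theorem exists_linearIndepOn_support (c : ι → ℝ) (hc : 0 ≤ c) :
    ∃ c' : ι → ℝ, 0 ≤ c' ∧ ∑ i, c' i • v i = ∑ i, c i • v i ∧
      LinearIndepOn ℝ v (Function.support c') := by
  induction hn : (Function.support c).ncard using Nat.strong_induction_on generalizing c with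
  | _ n ih =>
    by_cases hind : LinearIndepOn ℝ v (Function.support c)
    · exact ⟨c, hc, rfl, hind⟩
    obtain ⟨c', hc', hsum, hss⟩ := exists_support_ssubset_of_not_linearIndepOn hc hind
    obtain ⟨d, hd, hdsum, hdind⟩ := ih _ (hn ▸ Set.ncard_lt_ncard hss) c' hc' rfl
    exact ⟨d, hd, hdsum.trans hsum, hdind⟩

theorem PointedCone.exists_linearIndepOn_of_mem_hull_range
    (hx : x ∈ PointedCone.hull ℝ (range v)) :
    ∃ s : Set ι, LinearIndepOn ℝ v s ∧ x ∈ PointedCone.hull ℝ (v '' s) := by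
  obtain ⟨c, hc, rfl⟩ := PointedCone.mem_hull_range_iff.1 hx
  obtain ⟨d, hd, hsum, hind⟩ := exists_linearIndepOn_support (v := v) c hc
  refine ⟨_, hind, hsum ▸ Submodule.sum_mem _ fun i _ => ?_⟩
  by_cases hi : d i = 0
  · simp [hi]
  · exact PointedCone.smul_mem _ (hd i) (PointedCone.subset_hull (Set.mem_image_of_mem v hi))

section Topology

variable {κ F : Type*} [AddCommGroup F] [Module ℝ F] [TopologicalSpace F]
  [IsTopologicalAddGroup F] [ContinuousSMul ℝ F] [T2Space F]

theorem PointedCone.isClosed_hull_range_of_linearIndependent [Finite κ] {w : κ → F}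
    (hw : LinearIndependent ℝ w) : IsClosed (PointedCone.hull ℝ (range w) : Set F) := by
  have := Fintype.ofFinite κ
  have hemb : Topology.IsClosedEmbedding (Fintype.linearCombination ℝ w) :=
    LinearMap.isClosedEmbedding_of_injective
      (LinearMap.ker_eq_bot.2 hw.fintypeLinearCombination_injective)
  have himage : (PointedCone.hull ℝ (range w) : Set F) =
      Fintype.linearCombination ℝ w '' Set.Ici 0 := by
    ext y
    simp [PointedCone.mem_hull_range_iff, Fintype.linearCombination_apply]
  rw [himage]
  exact hemb.isClosedMap _ isClosed_Ici

theorem PointedCone.isClosed_hull_range (w : ι → F) :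
    IsClosed (PointedCone.hull ℝ (range w) : Set F) := by
  have hunion : (PointedCone.hull ℝ (range w) : Set F) =
      ⋃ s : {s : Set ι // LinearIndepOn ℝ w s}, PointedCone.hull ℝ (w '' s) := by
    refine subset_antisymm (fun x hx => ?_) (Set.iUnion_subset fun s => ?_)
    · obtain ⟨s, hs, hxs⟩ := PointedCone.exists_linearIndepOn_of_mem_hull_range hx
      exact Set.mem_iUnion.2 ⟨⟨s, hs⟩, hxs⟩
    · exact Submodule.span_mono (Set.image_subset_range _ _)
  rw [hunion]
  refine isClosed_iUnion_of_finite fun s => ?_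
  rw [Set.image_eq_range]
  exact PointedCone.isClosed_hull_range_of_linearIndependent s.2

end Topology

section Hilbert

variable {E : Type*} [NormedAddCommGroup E] [InnerProductSpace ℝ E] [CompleteSpace E]

theorem ProperCone.innerDual_hull (s : Set E) :
    ProperCone.innerDual (PointedCone.hull ℝ s : Set E) = ProperCone.innerDual s :=
  ProperCone.toPointedCone_injective <| by simp

theorem ProperCone.innerDual_innerDual_range (v : ι → E) :
    (ProperCone.innerDual (ProperCone.innerDual (range v) : Set E) : Set E) =
      PointedCone.hull ℝ (range v) := by
  let C : ProperCone ℝ E := ⟨PointedCone.hull ℝ (range v), PointedCone.isClosed_hull_range v⟩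
  rw [← ProperCone.innerDual_hull (range v)]
  exact congrArg SetLike.coe (ProperCone.innerDual_innerDual C)

end Hilbert

namespace Matrix

variable {m n : Type*}

theorem inner_toLp_row [Fintype n] (A : Matrix m n ℝ) (j : m) (z : EuclideanSpace ℝ n) :
    ⟪WithLp.toLp 2 (A j), z⟫ = (A *ᵥ z) j := by
  simp [EuclideanSpace.inner_eq_star_dotProduct, mulVec, dotProduct_comm]

theorem sum_smul_toLp_row [Fintype m] (A : Matrix m n ℝ) (c : m → ℝ) :
    ∑ j, c j • WithLp.toLp 2 (A j) = WithLp.toLp 2 (Aᵀ *ᵥ c) := by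
  simp [mulVec_transpose, vecMul_eq_sum, ← WithLp.toLp_sum, ← WithLp.toLp_smul]

end Matrix

/-- The polar cone of `K = {y : A y ≥ 0}` consists exactly of the nonnegative
combinations of the negated rows of `A`. -/
theorem polar_cone_of_polyhedral_cone (m n : ℕ) (A : Matrix (Fin m) (Fin n) ℝ) :
    {v : EuclideanSpace ℝ (Fin n) |
        ∀ z : EuclideanSpace ℝ (Fin n), (∀ j, 0 ≤ A.mulVec z j) → ⟪v, z⟫ ≤ 0} =
      {v : EuclideanSpace ℝ (Fin n) |
        ∃ lam : Fin m → ℝ, (∀ j, 0 ≤ lam j) ∧ v = -(A.transpose.mulVec lam)} := by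
  set rows : Fin m → EuclideanSpace ℝ (Fin n) := fun j => WithLp.toLp 2 (A j)
  ext v
  have hpolar : (∀ z : EuclideanSpace ℝ (Fin n), (∀ j, 0 ≤ A.mulVec z j) → ⟪v, z⟫ ≤ 0) ↔
      -v ∈ ProperCone.innerDual (ProperCone.innerDual (range rows) : Set _) := by
    simp [rows, Matrix.inner_toLp_row, inner_neg_right, real_inner_comm v]
  rw [Set.mem_ofPred_eq, hpolar, ← SetLike.mem_coe, ProperCone.innerDual_innerDual_range,
    SetLike.mem_coe, PointedCone.mem_hull_range_iff, Set.mem_ofPred_eq]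
  simp only [rows, Matrix.sum_smul_toLp_row, Pi.le_def, Pi.zero_apply]
  refine exists_congr fun lam => and_congr_right fun _ => ⟨fun h => ?_, fun h => ?_⟩
  · rw [← neg_neg v, ← h]
    rfl
  · rw [← WithLp.toLp_ofLp (p := 2) v, h, WithLp.toLp_neg, neg_neg]
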